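/- arXiv:2212.03625 — 3 statements merged into one kernel-verified Lean document; each statement's English description precedes it below -/
import Mathlib

section
/- For each n ∈ ℤ, the L²(𝕋)-valued function t ↦ π_ξ(1, t) e_n (t real) is differentiable at t = 0 with derivative (iξ/2)·(e_{n+1} + e_{n−1}); that is, dπ_ξ(M_x) e_n = (iξ/2)(e_{n+1} + e_{n−1}), where M_x = [[0,1],[0,0]] generates translations in the real direction. -/
/-!
Setting: `𝕋 = {z ∈ ℂ : |z| = 1}` (the type `Circle`) with its normalized Haar
(arc-length probability) measure `haarT`, and `HT = L²(𝕋)`.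
For `ξ ∈ ℝ`, `ξ ≠ 0`, `a ∈ ℂ` with `|a| = 1` (i.e. `a : Circle`) and `b : ℂ`,
`π_ξ(a,b)` acts by `(π_ξ(a,b)F)(z) = exp(i ξ Re(b conj z)) F(a⁻¹ z)`.
-/

noncomputable section

open MeasureTheory Complex

instance : MeasurableSpace Circle := borel Circle
instance : BorelSpace Circle := ⟨rfl⟩

lemma Circle.continuous_coe' : Continuous ((↑) : Circle → ℂ) := by
  exact continuous_induced_dom

lemma Circle.continuous_zpow_coe (n : ℤ) : Continuous fun z : Circle => (z : ℂ) ^ n :=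
  Circle.continuous_coe'.zpow₀ n fun z => Or.inl (Circle.coe_ne_zero z)

/-- The normalized Haar (arc-length probability) measure on the circle. -/
abbrev haarT : Measure Circle := MeasureTheory.Measure.haar

/-- The Hilbert space `L²(𝕋)`. -/
abbrev HT : Type := Lp ℂ 2 haarT

/-- The orthonormal basis `e n = (z ↦ zⁿ)` of `L²(𝕋)`. -/
def e (n : ℤ) : HT :=
  MemLp.toLp (fun z : Circle => (z : ℂ) ^ n)
    ((memLp_top_of_bound (Circle.continuous_zpow_coe n).aestronglyMeasurable 1
      (Filter.Eventually.of_forall fun z => by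
        simp [norm_zpow, Circle.norm_coe])).mono_exponent le_top)

/-- The function giving the action of `π_ξ(a,b)`:
`z ↦ exp(i ξ Re(b conj z)) · F(a⁻¹ z)`. -/
def piFun (ξ : ℝ) (a : Circle) (b : ℂ) (F : Circle → ℂ) : Circle → ℂ :=
  fun z => Complex.exp (Complex.I * ξ * ((b * (starRingEnd ℂ) (z : ℂ)).re : ℂ)) * F (a⁻¹ * z)

/-- The unitary `U` acts by the defining formula of `π_ξ(a,b)`. -/
def IsPi (ξ : ℝ) (a : Circle) (b : ℂ) (U : HT ≃ₗᵢ[ℂ] HT) : Prop :=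
  ∀ F : HT, (U F : Circle → ℂ) =ᵐ[haarT] piFun ξ a b (F : Circle → ℂ)

/-- `T` is the operator of multiplication by `φ`. -/
def IsMul (φ : Circle → ℂ) (T : HT →L[ℂ] HT) : Prop :=
  ∀ F : HT, (T F : Circle → ℂ) =ᵐ[haarT] fun z => φ z * F z

/-!
Along the one-parameter group `t ↦ π_ξ(1, t)` the operator is multiplication by
`exp(i ξ t Re z)`, and on the circle `2 Re z · zⁿ = z^{n+1} + z^{n-1}`. So the difference quotient
differs from the candidate derivative by `zⁿ (e^{iθ} - 1 - iθ) / t` with `θ = ξ t Re z`, and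
`|e^{iθ} - 1 - iθ| ≤ 2θ² ≤ 2ξ²t²` uniformly in `z`; the `L²` norm of the remainder is therefore
`O(t²)`.
-/

open Asymptotics

lemma norm_exp_I_mul_ofReal_sub_one_sub_le (θ : ℝ) :
    ‖exp (I * θ) - 1 - I * θ‖ ≤ 2 * θ ^ 2 := by
  rcases le_or_gt |θ| 1 with h | h
  · calc _ ≤ ‖I * (θ : ℂ)‖ ^ 2 := norm_exp_sub_one_sub_id_le (by simpa using h)
      _ = θ ^ 2 := by simp
      _ ≤ 2 * θ ^ 2 := by nlinarith [sq_nonneg θ]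
  · calc _ ≤ ‖exp (I * θ) - 1‖ + ‖I * (θ : ℂ)‖ := norm_sub_le _ _
      _ ≤ |θ| + |θ| := by
          gcongr
          · simpa using Real.norm_exp_I_mul_ofReal_sub_one_le (x := θ)
          · simp
      _ ≤ 2 * θ ^ 2 := by nlinarith [sq_abs θ]

lemma Circle.coe_zpow_add_one_add_coe_zpow_sub_one (z : Circle) (n : ℤ) :
    (z : ℂ) ^ (n + 1) + (z : ℂ) ^ (n - 1) = 2 * (z : ℂ).re * (z : ℂ) ^ n := by
  have hz : (z : ℂ) ≠ 0 := Circle.coe_ne_zero z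
  rw [zpow_add_one₀ hz, zpow_sub_one₀ hz, ← Circle.coe_inv, Circle.coe_inv_eq_conj,
    ← mul_add, add_conj]
  push_cast
  ring

lemma coeFn_e (n : ℤ) : (e n : Circle → ℂ) =ᵐ[haarT] fun z : Circle => (z : ℂ) ^ n :=
  MemLp.coeFn_toLp _

lemma piFun_congr_ae (ξ : ℝ) (a : Circle) (b : ℂ) {F G : Circle → ℂ} (h : F =ᵐ[haarT] G) :
    piFun ξ a b F =ᵐ[haarT] piFun ξ a b G := by
  filter_upwards [(measurePreserving_mul_left haarT a⁻¹).quasiMeasurePreserving.ae_eq_comp h]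
    with z hz
  simp only [piFun, Function.comp_apply] at hz ⊢
  rw [hz]

lemma norm_piFun_one_zpow_sub_le (ξ t : ℝ) (n : ℤ) (z : Circle) :
    ‖piFun ξ 1 t (fun z => (z : ℂ) ^ n) z - (z : ℂ) ^ n
        - t * (I * ξ / 2 * ((z : ℂ) ^ (n + 1) + (z : ℂ) ^ (n - 1)))‖ ≤ 2 * ξ ^ 2 * t ^ 2 := by
  set θ := ξ * t * (z : ℂ).re
  have h_remainder : piFun ξ 1 t (fun z => (z : ℂ) ^ n) z - (z : ℂ) ^ n
        - t * (I * ξ / 2 * ((z : ℂ) ^ (n + 1) + (z : ℂ) ^ (n - 1)))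
      = (z : ℂ) ^ n * (exp (I * θ) - 1 - I * θ) := by
    simp only [piFun, inv_one, one_mul, Circle.coe_zpow_add_one_add_coe_zpow_sub_one, θ,
      ofReal_mul, re_ofReal_mul, conj_re]
    ring_nf
  have h_re : (z : ℂ).re ^ 2 ≤ 1 := by
    rw [sq_le_one_iff_abs_le_one]
    simpa [Circle.norm_coe] using abs_re_le_norm (z : ℂ)
  rw [h_remainder, norm_mul, norm_zpow, Circle.norm_coe, one_zpow, one_mul]
  calc _ ≤ 2 * θ ^ 2 := norm_exp_I_mul_ofReal_sub_one_sub_le θ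
    _ = 2 * ξ ^ 2 * t ^ 2 * (z : ℂ).re ^ 2 := by ring
    _ ≤ 2 * ξ ^ 2 * t ^ 2 := mul_le_of_le_one_right (by positivity) h_re

lemma IsPi.apply_eq_self {ξ : ℝ} {U : HT ≃ₗᵢ[ℂ] HT} (hU : IsPi ξ 1 0 U) (F : HT) : U F = F :=
  Lp.ext <| (hU F).trans <| .of_forall fun z => by simp [piFun]

lemma IsPi.coeFn_apply_e {ξ : ℝ} {a : Circle} {b : ℂ} {V : HT ≃ₗᵢ[ℂ] HT} (hV : IsPi ξ a b V)
    (n : ℤ) : (V (e n) : Circle → ℂ) =ᵐ[haarT] piFun ξ a b fun z => (z : ℂ) ^ n :=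
  (hV (e n)).trans (piFun_congr_ae ξ a b (coeFn_e n))

lemma IsPi.norm_apply_e_sub_sub_le {ξ t : ℝ} {V : HT ≃ₗᵢ[ℂ] HT} (hV : IsPi ξ 1 t V) (n : ℤ) :
    ‖V (e n) - e n - t • (I * ξ / 2) • (e (n + 1) + e (n - 1))‖
      ≤ measureUnivNNReal haarT ^ (2 : ENNReal).toReal⁻¹ * (2 * ξ ^ 2) * t ^ 2 := by
  rw [mul_assoc]
  refine Lp.norm_le_of_ae_bound (by positivity) ?_
  filter_upwards [Lp.coeFn_sub (V (e n) - e n) _, Lp.coeFn_sub (V (e n)) (e n),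
    Lp.coeFn_smul t ((I * ξ / 2) • (e (n + 1) + e (n - 1))),
    Lp.coeFn_smul (I * ξ / 2) (e (n + 1) + e (n - 1)), Lp.coeFn_add (e (n + 1)) (e (n - 1)),
    hV.coeFn_apply_e n, coeFn_e n, coeFn_e (n + 1), coeFn_e (n - 1)]
    with z h₁ h₂ h₃ h₄ h₅ hV' h₆ h₇ h₈
  rw [h₁, Pi.sub_apply, h₂, Pi.sub_apply, h₃, Pi.smul_apply, h₄, Pi.smul_apply, h₅, Pi.add_apply,
    hV', h₆, h₇, h₈, smul_eq_mul, Complex.real_smul]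
  exact norm_piFun_one_zpow_sub_le ξ t n z

theorem statement6_general (ξ : ℝ) (n : ℤ) (U : ℝ → (HT ≃ₗᵢ[ℂ] HT))
    (hU : ∀ t : ℝ, IsPi ξ 1 (t : ℂ) (U t)) :
    HasDerivAt (fun t : ℝ => (U t) (e n))
      ((Complex.I * (ξ : ℂ) / 2) • (e (n + 1) + e (n - 1))) 0 := by
  have hU₀ : IsPi ξ 1 0 (U 0) := by simpa using hU 0
  rw [hasDerivAt_iff_isLittleO, hU₀.apply_eq_self]
  simp only [sub_zero]
  refine IsBigO.trans_isLittleO ?_ (isLittleO_pow_id one_lt_two)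
  exact isBigO_of_le' _ fun t => by
    simpa only [norm_pow, Real.norm_eq_abs, sq_abs] using (hU t).norm_apply_e_sub_sub_le n

/-- `t ↦ π_ξ(1, t) e_n` (`t` real) is differentiable at `t = 0` with derivative
`(iξ/2)(e_{n+1} + e_{n−1})`, i.e. `dπ_ξ(M_x) e_n = (iξ/2)(e_{n+1} + e_{n−1})`. -/
theorem statement6 (ξ : ℝ) (hξ : ξ ≠ 0) (n : ℤ) (U : ℝ → (HT ≃ₗᵢ[ℂ] HT))
    (hU : ∀ t : ℝ, IsPi ξ 1 (t : ℂ) (U t)) :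
    HasDerivAt (fun t : ℝ => (U t) (e n))
      ((Complex.I * (ξ : ℂ) / 2) • (e (n + 1) + e (n - 1))) 0 :=
  statement6_general ξ n U hU
end
end

section
/- For each n ∈ ℤ, the L²(𝕋)-valued function t ↦ π_ξ(1, it) e_n (t real) is differentiable at t = 0 with derivative (ξ/2)·(e_{n+1} − e_{n−1}); that is, dπ_ξ(M_y) e_n = (ξ/2)(e_{n+1} − e_{n−1}), where M_y = [[0,i],[0,0]] generates translations in the imaginary direction. -/
/-!
Setting: `𝕋 = {z ∈ ℂ : |z| = 1}` (the type `Circle`) with its normalized Haar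
(arc-length probability) measure `haarT`, and `HT = L²(𝕋)`.
For `ξ ∈ ℝ`, `ξ ≠ 0`, `a ∈ ℂ` with `|a| = 1` (i.e. `a : Circle`) and `b : ℂ`,
`π_ξ(a,b)` acts by `(π_ξ(a,b)F)(z) = exp(i ξ Re(b conj z)) F(a⁻¹ z)`.
-/

noncomputable section

open MeasureTheory Complex

/-!
On the circle `π_ξ(1, it)` is multiplication by `exp(t · iξ Im z)`, so `t ↦ π_ξ(1, it) e_n` is the
image in `L²(𝕋)` of `t ↦ exp(tA) · zⁿ` in the Banach algebra `C(𝕋, ℂ)`, where `A z = iξ Im z`.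
That curve has derivative `A · zⁿ` at `0` in the sup norm, and `C(𝕋, ℂ) → L²(𝕋)` is a bounded
linear map. Finally `2i Im z = z - z⁻¹` on the circle gives `A · zⁿ = (ξ/2)(zⁿ⁺¹ - zⁿ⁻¹)`.
-/

open NormedSpace

theorem ContinuousMap.exp_apply {X : Type*} [TopologicalSpace X] [CompactSpace X]
    (f : C(X, ℂ)) (x : X) : exp f x = Complex.exp (f x) := by
  rw [Complex.exp_eq_exp_ℂ]
  exact map_exp (ContinuousMap.evalAlgHom ℂ ℂ x) (continuous_eval_const x) f

theorem ContinuousMap.hasDerivAt_toLp_exp_smul_mul {X : Type*} [TopologicalSpace X]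
    [CompactSpace X] [MeasurableSpace X] [BorelSpace X] (p : ENNReal) [Fact (1 ≤ p)]
    (μ : Measure X) [IsFiniteMeasure μ] (a g : C(X, ℂ)) :
    HasDerivAt (fun t : ℝ => toLp p μ ℂ (exp (t • a) * g)) (toLp p μ ℂ (a * g)) 0 := by
  have hexp : HasDerivAt (fun t : ℝ => exp (t • a)) a 0 := by
    simpa using hasDerivAt_exp_smul_const (𝕂 := ℝ) a 0
  exact ((toLp p μ ℂ).restrictScalars ℝ).hasFDerivAt.comp_hasDerivAt 0 (hexp.mul_const g)

namespace Circle

def zpowCM (n : ℤ) : C(Circle, ℂ) := ⟨fun z => (z : ℂ) ^ n, continuous_zpow_coe n⟩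

def imCM : C(Circle, ℂ) := ⟨fun z => ((z : ℂ).im : ℂ), by fun_prop⟩

theorem toLp_zpowCM (n : ℤ) : ContinuousMap.toLp 2 haarT ℂ (zpowCM n) = e n :=
  rfl

theorem two_I_smul_imCM_mul_zpowCM (n : ℤ) :
    (2 * I) • (imCM * zpowCM n) = zpowCM (n + 1) - zpowCM (n - 1) := by
  ext z
  have hz := coe_ne_zero z
  simp only [ContinuousMap.smul_apply, ContinuousMap.mul_apply, ContinuousMap.sub_apply, zpowCM,
    imCM, ContinuousMap.coe_mk, smul_eq_mul, zpow_add_one₀ hz, zpow_sub_one₀ hz]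
  rw [← coe_inv, coe_inv_eq_conj, ← mul_sub, Complex.sub_conj]
  push_cast
  ring

end Circle

open Circle

theorem IsPi.apply_toLp {ξ t : ℝ} {U : HT ≃ₗᵢ[ℂ] HT} (hU : IsPi ξ 1 ((t : ℂ) * I) U)
    (F : C(Circle, ℂ)) :
    U (ContinuousMap.toLp 2 haarT ℂ F) =
      ContinuousMap.toLp 2 haarT ℂ (exp (t • (I * ξ) • imCM) * F) := by
  refine Lp.ext ?_
  filter_upwards [hU (ContinuousMap.toLp 2 haarT ℂ F),
    ContinuousMap.coeFn_toLp (p := 2) (𝕜 := ℂ) haarT F,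
    ContinuousMap.coeFn_toLp (p := 2) (𝕜 := ℂ) haarT (exp (t • (I * ξ) • imCM) * F)]
    with z hUz hFz hGz
  have hre : ((t : ℂ) * I * (starRingEnd ℂ) (z : ℂ)).re = t * (z : ℂ).im := by
    simp [Complex.mul_re]
  rw [hUz, hGz, piFun, inv_one, one_mul, hFz, hre, ContinuousMap.mul_apply,
    ContinuousMap.exp_apply]
  simp only [ContinuousMap.smul_apply, imCM, ContinuousMap.coe_mk, real_smul, smul_eq_mul]
  push_cast
  ring_nf

theorem statement7_general (ξ : ℝ) (n : ℤ) (U : ℝ → (HT ≃ₗᵢ[ℂ] HT))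
    (hU : ∀ t : ℝ, IsPi ξ 1 ((t : ℂ) * Complex.I) (U t)) :
    HasDerivAt (fun t : ℝ => (U t) (e n))
      (((ξ : ℂ) / 2) • (e (n + 1) - e (n - 1))) 0 := by
  have hUe : (fun t : ℝ => U t (e n)) =
      fun t : ℝ => ContinuousMap.toLp 2 haarT ℂ (exp (t • (I * ξ) • imCM) * zpowCM n) := by
    funext t
    rw [← toLp_zpowCM, (hU t).apply_toLp]
  have hderiv :
      ((I * ξ) • imCM) * zpowCM n = ((ξ : ℂ) / 2) • (zpowCM (n + 1) - zpowCM (n - 1)) := by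
    rw [← two_I_smul_imCM_mul_zpowCM, smul_smul, smul_mul_assoc]
    congr 1
    field_simp
  rw [hUe, ← toLp_zpowCM, ← toLp_zpowCM, ← map_sub, ← map_smul, ← hderiv]
  exact ContinuousMap.hasDerivAt_toLp_exp_smul_mul 2 haarT _ _

/-- `t ↦ π_ξ(1, it) e_n` (`t` real) is differentiable at `t = 0` with derivative
`(ξ/2)(e_{n+1} − e_{n−1})`, i.e. `dπ_ξ(M_y) e_n = (ξ/2)(e_{n+1} − e_{n−1})`. -/
theorem statement7 (ξ : ℝ) (hξ : ξ ≠ 0) (n : ℤ) (U : ℝ → (HT ≃ₗᵢ[ℂ] HT))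
    (hU : ∀ t : ℝ, IsPi ξ 1 ((t : ℂ) * Complex.I) (U t)) :
    HasDerivAt (fun t : ℝ => (U t) (e n))
      (((ξ : ℂ) / 2) • (e (n + 1) - e (n - 1))) 0 :=
  statement7_general ξ n U hU
end
end

section
/- Let m ∈ ℤ and let T be a bounded operator on L²(𝕋) satisfying the K-equivariance condition π_ξ(w,0) ∘ T ∘ π_ξ(w,0)⁻¹ = w^{−m}·T for every w ∈ ℂ with |w| = 1. Then there exists a sequence (c_n)_{n∈ℤ} of complex numbers such that T e_n = c_{m+n}·e_{m+n} for every n ∈ ℤ. -/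
/-!
Setting: `𝕋 = {z ∈ ℂ : |z| = 1}` (the type `Circle`) with its normalized Haar
(arc-length probability) measure `haarT`, and `HT = L²(𝕋)`.
For `ξ ∈ ℝ`, `ξ ≠ 0`, `a ∈ ℂ` with `|a| = 1` (i.e. `a : Circle`) and `b : ℂ`,
`π_ξ(a,b)` acts by `(π_ξ(a,b)F)(z) = exp(i ξ Re(b conj z)) F(a⁻¹ z)`.
-/

noncomputable section

open MeasureTheory Complex

/-!
Rotations `F ↦ F(w⁻¹ ·)` are the operators `π_ξ(w,0)`, and they act on `e_n` by the scalar
`w⁻ⁿ`. The equivariance therefore makes `T e_n` an eigenvector of every rotation with eigenvalue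
`w^{-(m+n)}`, and since rotations act isometrically, `⟪e_k, T e_n⟫` is multiplied by
`w^{k-(m+n)}` under a rotation; choosing `w` with `w^{k-(m+n)} = -1` kills it for `k ≠ m + n`.
The characters `e_k` are complete in `L²(𝕋)` (Fourier series on `ℝ/ℤ`, transported to the circle
through uniqueness of Haar measure), so `T e_n` is a multiple of `e_{m+n}`.
-/

open AddCircle

/-- The standard identification `ℝ/ℤ ≃ 𝕋`, `x ↦ exp(2πix)`. -/
def expAddCircle : AddCircle (1 : ℝ) ≃ᵐ Circle :=
  (homeomorphCircle one_ne_zero).toMeasurableEquiv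

lemma expAddCircle_apply (x : AddCircle (1 : ℝ)) : expAddCircle x = toCircle x :=
  homeomorphCircle_apply one_ne_zero x

lemma expAddCircle_add (x y : AddCircle (1 : ℝ)) :
    expAddCircle (x + y) = expAddCircle x * expAddCircle y := by
  simp only [expAddCircle_apply, toCircle_add]

lemma coe_expAddCircle_zsmul (k : ℤ) (x : AddCircle (1 : ℝ)) :
    (expAddCircle (k • x) : ℂ) = (expAddCircle x : ℂ) ^ k := by
  rw [expAddCircle_apply, expAddCircle_apply, toCircle_zsmul, Circle.coe_zpow]

abbrev circleMeasure : Measure Circle := Measure.map expAddCircle haarAddCircle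

instance : circleMeasure.IsMulLeftInvariant := by
  refine ⟨fun c => ?_⟩
  rw [Measure.map_map (measurable_const_mul c) expAddCircle.measurable]
  have : (c * ·) ∘ expAddCircle = expAddCircle ∘ (expAddCircle.symm c + ·) := by
    funext x
    simp [expAddCircle_add]
  rw [this, ← Measure.map_map expAddCircle.measurable (measurable_const_add _),
    map_add_left_eq_self]

instance : circleMeasure.IsHaarMeasure where
  toIsOpenPosMeasure :=
    (homeomorphCircle one_ne_zero).continuous.isOpenPosMeasure_map expAddCircle.surjective

lemma ae_eq_zero_of_integral_zpow_mul_eq_zero_circleMeasure {f : Circle → ℂ}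
    (hf : MemLp f 2 circleMeasure) (h : ∀ k : ℤ, ∫ z, (z : ℂ) ^ k * f z ∂circleMeasure = 0) :
    f =ᵐ[circleMeasure] 0 := by
  have hg : MemLp (f ∘ expAddCircle) 2 haarAddCircle :=
    hf.comp_measurePreserving ⟨expAddCircle.measurable, rfl⟩
  have hcoeff : fourierBasis.repr (hg.toLp) = 0 := by
    ext k
    rw [fourierBasis_repr, lp.coeFn_zero, Pi.zero_apply, fourierCoeff, ← h (-k),
      integral_map_equiv]
    refine integral_congr_ae ?_
    filter_upwards [hg.coeFn_toLp] with x hx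
    rw [hx, fourier_apply, smul_eq_mul, Function.comp_apply, ← expAddCircle_apply,
      coe_expAddCircle_zsmul]
  have hg0 : hg.toLp = 0 := by simpa using hcoeff
  have : f ∘ expAddCircle =ᵐ[haarAddCircle] 0 :=
    hg.coeFn_toLp.symm.trans (hg0 ▸ Lp.coeFn_zero ..)
  exact expAddCircle.measurableEmbedding.ae_map_iff.mpr this

theorem Circle.ae_eq_zero_of_integral_zpow_mul_eq_zero (μ : Measure Circle) [μ.IsHaarMeasure]
    {f : Circle → ℂ} (hf : MemLp f 2 μ) (h : ∀ k : ℤ, ∫ z, (z : ℂ) ^ k * f z ∂μ = 0) :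
    f =ᵐ[μ] 0 := by
  set c := Measure.haarScalarFactor circleMeasure μ
  have hc : c ≠ 0 := (Measure.haarScalarFactor_pos_of_isHaarMeasure _ _).ne'
  have hμ : circleMeasure = c • μ := Measure.isMulInvariant_eq_smul_of_compactSpace _ _
  have hfc : f =ᵐ[circleMeasure] 0 := by
    refine ae_eq_zero_of_integral_zpow_mul_eq_zero_circleMeasure ?_ fun k => ?_
    · rw [hμ]; exact hf.smul_measure ENNReal.coe_ne_top
    · rw [hμ, integral_smul_nnreal_measure, h, smul_zero]
  rwa [hμ, Measure.ae_smul_measure_eq hc] at hfc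

section LeftTranslation

variable (𝕜 : Type*) {G E : Type*} [NormedField 𝕜] [Group G] [MeasurableSpace G]
  [MeasurableMul G] {μ : Measure G} [μ.IsMulLeftInvariant] [NormedAddCommGroup E]
  [NormedSpace 𝕜 E] {p : ENNReal}

lemma MeasureTheory.Lp.compMeasurePreserving_mul_left_comp_mul_left {a b : G} (hab : a * b = 1)
    (F : Lp E p μ) :
    Lp.compMeasurePreserving (b * ·) (measurePreserving_mul_left μ b)
      (Lp.compMeasurePreserving (a * ·) (measurePreserving_mul_left μ a) F) = F := by
  rw [← Lp.compMeasurePreserving_comp_apply]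
  convert Lp.compMeasurePreserving_id_apply F
  ext
  simp [← mul_assoc, hab]

def leftTranslateLp [Fact (1 ≤ p)] (w : G) : Lp E p μ ≃ₗᵢ[𝕜] Lp E p μ :=
  { Lp.compMeasurePreservingₗᵢ 𝕜 (w⁻¹ * ·) (measurePreserving_mul_left μ w⁻¹) with
    invFun := Lp.compMeasurePreserving (w * ·) (measurePreserving_mul_left μ w)
    left_inv := Lp.compMeasurePreserving_mul_left_comp_mul_left (inv_mul_cancel w)
    right_inv := Lp.compMeasurePreserving_mul_left_comp_mul_left (mul_inv_cancel w) }

lemma leftTranslateLp_ae_eq [Fact (1 ≤ p)] (w : G) (F : Lp E p μ) :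
    leftTranslateLp 𝕜 w F =ᵐ[μ] fun z => F (w⁻¹ * z) :=
  Lp.coeFn_compMeasurePreserving F _

end LeftTranslation

open scoped InnerProductSpace

lemma Circle.exists_zpow_eq_neg_one {l : ℤ} (hl : l ≠ 0) : ∃ w : Circle, (w : ℂ) ^ l = -1 := by
  refine ⟨Circle.exp (Real.pi / l), ?_⟩
  rw [Circle.coe_exp, ← Complex.exp_int_mul, ← Complex.exp_pi_mul_I]
  congr 1
  have : (l : ℂ) ≠ 0 := Int.cast_ne_zero.mpr hl
  push_cast
  field_simp

lemma e_ae_eq (n : ℤ) : e n =ᵐ[haarT] fun z => (z : ℂ) ^ n :=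
  MemLp.coeFn_toLp _

lemma e_ne_zero (n : ℤ) : e n ≠ 0 := by
  intro h
  rw [Lp.eq_zero_iff_ae_eq_zero] at h
  obtain ⟨z, hz⟩ := ((e_ae_eq n).symm.trans h).exists
  exact zpow_ne_zero n (Circle.coe_ne_zero z) hz

lemma inner_e_left (k : ℤ) (G : HT) : ⟪e k, G⟫_ℂ = ∫ z, (z : ℂ) ^ (-k) * G z ∂haarT := by
  rw [MeasureTheory.L2.inner_def]
  refine integral_congr_ae ?_
  filter_upwards [e_ae_eq k] with z hz
  rw [RCLike.inner_apply, hz, map_zpow₀, ← Circle.coe_inv_eq_conj, Circle.coe_inv, inv_zpow',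
    mul_comm]

lemma eq_zero_of_forall_inner_e_eq_zero {G : HT} (h : ∀ k, ⟪e k, G⟫_ℂ = 0) : G = 0 :=
  Lp.eq_zero_iff_ae_eq_zero.mpr <|
    Circle.ae_eq_zero_of_integral_zpow_mul_eq_zero haarT (Lp.memLp G) fun k => by
      simpa [inner_e_left] using h (-k)

lemma isPi_leftTranslateLp (ξ : ℝ) (w : Circle) : IsPi ξ w 0 (leftTranslateLp ℂ w) := by
  intro F
  filter_upwards [leftTranslateLp_ae_eq ℂ w F] with z hz
  simp [hz, piFun]

lemma leftTranslateLp_e (w : Circle) (n : ℤ) :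
    leftTranslateLp ℂ w (e n) = (w : ℂ) ^ (-n) • e n := by
  refine Lp.ext ?_
  filter_upwards [leftTranslateLp_ae_eq ℂ w (e n),
    (measurePreserving_mul_left haarT w⁻¹).quasiMeasurePreserving.ae_eq_comp (e_ae_eq n),
    Lp.coeFn_smul ((w : ℂ) ^ (-n)) (e n), e_ae_eq n] with z h1 h2 h3 h4
  rw [h1, Function.comp_apply.symm.trans h2, h3, Pi.smul_apply, h4]
  simp [mul_zpow, inv_zpow']

lemma inner_e_eq_zero_of_leftTranslateLp_eq {N : ℤ} {G : HT}
    (hG : ∀ w : Circle, leftTranslateLp ℂ w G = (w : ℂ) ^ (-N) • G) {k : ℤ} (hk : k ≠ N) :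
    ⟪e k, G⟫_ℂ = 0 := by
  obtain ⟨w, hw⟩ := Circle.exists_zpow_eq_neg_one (sub_ne_zero.mpr hk)
  have hconj : (starRingEnd ℂ) ((w : ℂ) ^ (-k)) = (w : ℂ) ^ k := by
    rw [map_zpow₀, ← Circle.coe_inv_eq_conj, Circle.coe_inv, inv_zpow', neg_neg]
  have h := (leftTranslateLp ℂ w).inner_map_map (e k) G
  rw [leftTranslateLp_e, hG, inner_smul_left, inner_smul_right, hconj, ← mul_assoc,
    ← zpow_add₀ (Circle.coe_ne_zero w), ← sub_eq_add_neg, hw] at h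
  linear_combination -h / 2

lemma exists_eq_smul_e_of_inner_e_eq_zero {N : ℤ} {G : HT} (h : ∀ k ≠ N, ⟪e k, G⟫_ℂ = 0) :
    ∃ c : ℂ, G = c • e N := by
  have horth : ∀ k ≠ N, ⟪e k, e N⟫_ℂ = 0 :=
    fun _ => inner_e_eq_zero_of_leftTranslateLp_eq (leftTranslateLp_e · N)
  have hN : ⟪e N, e N⟫_ℂ ≠ 0 := inner_self_ne_zero.mpr (e_ne_zero N)
  refine ⟨⟪e N, G⟫_ℂ / ⟪e N, e N⟫_ℂ,
    sub_eq_zero.mp (eq_zero_of_forall_inner_e_eq_zero fun k => ?_)⟩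
  rw [inner_sub_right, inner_smul_right]
  rcases eq_or_ne k N with rfl | hk
  · rw [div_mul_cancel₀ _ hN, sub_self]
  · rw [h k hk, horth k hk, mul_zero, sub_zero]

theorem statement8_general (ξ : ℝ) (m : ℤ) (T : HT →L[ℂ] HT)
    (hT : ∀ (w : Circle) (U : HT ≃ₗᵢ[ℂ] HT), IsPi ξ w 0 U →
      ∀ F : HT, U (T (U.symm F)) = ((w : ℂ) ^ (-m)) • T F) :
    ∃ c : ℤ → ℂ, ∀ n : ℤ, T (e n) = c (m + n) • e (m + n) := by
  have eigen (n : ℤ) (w : Circle) :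
      leftTranslateLp ℂ w (T (e n)) = (w : ℂ) ^ (-(m + n)) • T (e n) := by
    have h := hT w _ (isPi_leftTranslateLp ξ w) (leftTranslateLp ℂ w (e n))
    rwa [LinearIsometryEquiv.symm_apply_apply, leftTranslateLp_e, map_smul, smul_smul,
      ← zpow_add₀ (Circle.coe_ne_zero w), ← neg_add] at h
  choose c hc using fun n => exists_eq_smul_e_of_inner_e_eq_zero fun _ hk =>
    inner_e_eq_zero_of_leftTranslateLp_eq (eigen n) hk
  exact ⟨fun k => c (k - m), fun n => by simpa using hc n⟩

/-- if a bounded operator `T` on `L²(𝕋)` satisfies the `K`-equivariance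
`π_ξ(w,0) ∘ T ∘ π_ξ(w,0)⁻¹ = w^{−m}·T` for all `|w| = 1`, then there are scalars `c_n` with
`T e_n = c_{m+n} e_{m+n}` for all `n`. -/
theorem statement8 (ξ : ℝ) (hξ : ξ ≠ 0) (m : ℤ) (T : HT →L[ℂ] HT)
    (hT : ∀ (w : Circle) (U : HT ≃ₗᵢ[ℂ] HT), IsPi ξ w 0 U →
      ∀ F : HT, U (T (U.symm F)) = ((w : ℂ) ^ (-m)) • T F) :
    ∃ c : ℤ → ℂ, ∀ n : ℤ, T (e n) = c (m + n) • e (m + n) :=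
  statement8_general ξ m T hT
end
end
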